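/- Let (R,m) be a Noetherian local ring, n ≥ 2, f_1,...,f_n, f ∈ m, J = (f_1,...,f_n), I = (J, f), J_i = (f_1,...,f_i), J_0 = 0. Assume that for all d ≥ 2 and all i = 1,...,n, ((J_{i-1}·I^{d-1} : f_i) ∩ I^{d-1}) / (J_{i-1}·I^{d-2}) = 0. Then for all d ≥ 2, E(I)_d ≅ (J·I^{d-1} : f^d)/(J·I^{d-2} : f^{d-1}). In particular, if J is a reduction of I, then rt(I) = rn_J(I) + 1. -/

import Mathlib

open Ideal Submodule

variable {R : Type*} [CommRing R]

/-- The linear map `(a₁,…,aₘ) ↦ Σ aⱼ zⱼ`. -/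
noncomputable def sumMul {m : ℕ} (z : Fin m → R) : (Fin m → R) →ₗ[R] R :=
  ∑ j, (LinearMap.proj j : (Fin m → R) →ₗ[R] R).smulRight (z j)

/-- The degree-`d` cycles of the Koszul complex of the degree-one elements
`z₁t,…,zₘt` on the Rees algebra of `I`. -/
noncomputable def kosZ1 {m : ℕ} (I : Ideal R) (z : Fin m → R) (d : ℕ) :
    Submodule R (Fin m → R) :=
  (⨅ j : Fin m, Submodule.comap (LinearMap.proj j) ((I ^ (d - 1) : Ideal R) : Submodule R R))
    ⊓ LinearMap.ker (sumMul z)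

/-- The degree-`d` boundaries of the Koszul complex of `z₁t,…,zₘt` on the Rees algebra
of `I`. -/
noncomputable def kosB1 {m : ℕ} (I : Ideal R) (z : Fin m → R) (d : ℕ) :
    Submodule R (Fin m → R) :=
  Submodule.span R {v | ∃ j l : Fin m, ∃ u ∈ I ^ (d - 2),
    v = Pi.single l (z j * u) - Pi.single j (z l * u)}

/-- The degree-`d` component of the first Koszul homology `H₁(z₁t,…,zₘt; R(I))`;
for the full sequence of generators of `I` this computes the `d`-th module of effective
relations `E(I)_d`. -/
noncomputable abbrev kosH1 {m : ℕ} (I : Ideal R) (z : Fin m → R) (d : ℕ) :=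
  ↥(kosZ1 I z d) ⧸ (Submodule.comap (kosZ1 I z d).subtype (kosB1 I z d))

/-- The quotient `A/B` of an ideal `A` by another ideal `B` (as `R`-modules). -/
noncomputable abbrev idealQuot {R : Type*} [CommRing R] (A B : Ideal R) :=
  ↥A ⧸ (Submodule.comap (Submodule.subtype (A : Submodule R R)) (B : Submodule R R))

/-- The ideal `J_k = (f₁,…,f_k)` generated by the first `k` elements of the sequence. -/
noncomputable def Jpart {n : ℕ} (z : Fin (n + 1) → R) (k : ℕ) : Ideal R :=
  Ideal.span (z '' {l : Fin (n + 1) | (l : ℕ) < k})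

/-- The reduction number of `I` with respect to `J`. -/
noncomputable def reductionNumber (J I : Ideal R) : ℕ :=
  sInf {r | I ^ (r + 1) = J * I ^ r}

/-- The relation type of `I`, computed through the vanishing of the modules of effective
relations: the smallest `L ≥ 1` such that `E(I)_d = H₁(z₁t,…,zₘt; R(I))_d = 0` for all
`d ≥ L + 1`, where `z` is a system of generators of `I`. -/
noncomputable def relationTypeKoszul {m : ℕ} (I : Ideal R) (z : Fin m → R) : ℕ :=
  sInf {L | 1 ≤ L ∧ ∀ d : ℕ, L + 1 ≤ d → kosZ1 I z d ≤ kosB1 I z d}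

/-!
A degree-`d` cycle `a` of the Koszul complex, `d = e + 2`, has last coordinate in
`I ^ (e + 1) = J * I ^ e + (f ^ (e + 1))`, so `a_last ≡ x * f ^ (e + 1)` modulo `J * I ^ e`; the
relation `∑ aⱼ zⱼ = 0` puts `x` in `(J * I ^ (e + 1) : f ^ (e + 2))`, `x` is determined modulo
`(J * I ^ e : f ^ (e + 1))`, and every such `x` arises. A cycle with `a_last ∈ J * I ^ e` is a
boundary: boundaries clear its last coordinate, and then its other coordinates from right to left,
because by the colon condition the `i`-th coordinate of a cycle supported on the first `i + 1`
coordinates lies in `J_i * I ^ e`.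

Hence `E(I)_d = 0` iff `(J * I ^ (d - 1) : f ^ d) ≤ (J * I ^ (d - 2) : f ^ (d - 1))`. Beyond the
reduction number both colon ideals are the unit ideal; in degree `rn_J(I) + 1` only the first is,
by minimality of the reduction number.
-/

lemma le_iff_subsingleton_quotient_comap {M : Type*} [AddCommGroup M] [Module R M]
    {p q : Submodule R M} : p ≤ q ↔ Subsingleton (p ⧸ q.comap p.subtype) := by
  rw [Submodule.Quotient.subsingleton_iff, Submodule.comap_subtype_eq_top]

noncomputable def mulMkQ (A K : Ideal R) (y : R) : A →ₗ[R] R ⧸ K :=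
  K.mkQ ∘ₗ LinearMap.mulRight R y ∘ₗ Submodule.subtype A

lemma ker_mulMkQ (A K : Ideal R) (y : R) :
    LinearMap.ker (mulMkQ A K y) =
      Submodule.comap (Submodule.subtype A) (Submodule.colon K (Ideal.span {y})) := by
  ext x
  simp only [mulMkQ, LinearMap.mem_ker, LinearMap.comp_apply, Submodule.mkQ_apply,
    Submodule.Quotient.mk_eq_zero, LinearMap.mulRight_apply, Submodule.subtype_apply,
    Submodule.mem_comap, Submodule.mem_colon_span_singleton, smul_eq_mul]

section Koszul

variable {m : ℕ} {I : Ideal R} {z : Fin m → R}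

lemma sumMul_apply (a : Fin m → R) : sumMul z a = ∑ j, a j * z j := by
  simp [sumMul, smul_eq_mul]

lemma mem_kosZ1 {d : ℕ} {a : Fin m → R} :
    a ∈ kosZ1 I z d ↔ (∀ j, a j ∈ I ^ (d - 1)) ∧ ∑ j, a j * z j = 0 := by
  simp [kosZ1, Submodule.mem_iInf, sumMul_apply]

lemma single_sub_single_mem_kosB1 {d : ℕ} {u : R} (hu : u ∈ I ^ (d - 2)) (j l : Fin m) :
    Pi.single l (z j * u) - Pi.single j (z l * u) ∈ kosB1 I z d :=
  Submodule.subset_span ⟨j, l, u, hu, rfl⟩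

lemma kosB1_le_kosZ1 (hz : ∀ j, z j ∈ I) (d : ℕ) : kosB1 I z d ≤ kosZ1 I z d := by
  have hIpow : I * I ^ (d - 2) ≤ I ^ (d - 1) := by
    rcases Nat.lt_or_ge d 2 with hd | hd
    · simp [show d - 1 = 0 by omega]
    · rw [← pow_succ', show d - 2 + 1 = d - 1 by omega]
  rw [kosB1, Submodule.span_le]
  rintro _ ⟨j, l, u, hu, rfl⟩
  refine mem_kosZ1.mpr ⟨fun k => ?_, ?_⟩
  · have hmem : ∀ i, z i * u ∈ I ^ (d - 1) := fun i => hIpow (Ideal.mul_mem_mul (hz i) hu)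
    refine sub_mem ?_ ?_ <;> rw [Pi.single_apply] <;> split_ifs <;> simp [hmem]
  · simp only [Pi.sub_apply, sub_mul, Finset.sum_sub_distrib, Pi.single_apply, ite_mul,
      zero_mul, Finset.sum_ite_eq', Finset.mem_univ, if_true]
    ring

lemma relationTypeKoszul_eq {r : ℕ}
    (hvan : ∀ d, r + 2 ≤ d → kosZ1 I z d ≤ kosB1 I z d)
    (hne : 1 ≤ r → ¬ kosZ1 I z (r + 1) ≤ kosB1 I z (r + 1)) :
    relationTypeKoszul I z = r + 1 := by
  have hmem : r + 1 ∈ {L | 1 ≤ L ∧ ∀ d, L + 1 ≤ d → kosZ1 I z d ≤ kosB1 I z d} :=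
    ⟨by omega, hvan⟩
  refine le_antisymm (Nat.sInf_le hmem) (le_csInf ⟨_, hmem⟩ ?_)
  rintro L ⟨hL, hLvan⟩
  by_contra! hlt
  exact hne (by omega) (hLvan _ (by omega))

end Koszul

section IdealPowers

variable {J I : Ideal R}

lemma reductionNumber_le {r : ℕ} (h : I ^ (r + 1) = J * I ^ r) : reductionNumber J I ≤ r :=
  Nat.sInf_le h

lemma pow_reductionNumber_succ (h : ∃ r, I ^ (r + 1) = J * I ^ r) :
    I ^ (reductionNumber J I + 1) = J * I ^ reductionNumber J I :=
  Nat.sInf_mem h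

lemma pow_succ_eq_mul_pow_of_le {r s : ℕ} (h : I ^ (r + 1) = J * I ^ r) (hrs : r ≤ s) :
    I ^ (s + 1) = J * I ^ s := by
  obtain ⟨t, rfl⟩ := Nat.exists_eq_add_of_le hrs
  calc I ^ (r + t + 1) = I ^ (r + 1) * I ^ t := by ring
    _ = J * I ^ (r + t) := by rw [h]; ring

variable {f : R}

lemma pow_succ_eq_mul_pow_sup (hI : I = J ⊔ Ideal.span {f}) (k : ℕ) :
    I ^ (k + 1) = J * I ^ k ⊔ Ideal.span {f ^ (k + 1)} := by
  induction k with
  | zero => simpa using hI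
  | succ k ih =>
    have hfJ : Ideal.span {f ^ (k + 1)} * J ≤ J * I ^ (k + 1) := by
      rw [mul_comm]
      refine Ideal.mul_mono_right (Ideal.span_singleton_le_iff_mem _ |>.mpr (pow_mem_pow ?_ _))
      exact hI ▸ Ideal.mem_sup_right (Ideal.mem_span_singleton_self f)
    calc I ^ (k + 1 + 1) = (J * I ^ k ⊔ Ideal.span {f ^ (k + 1)}) * I := by rw [← ih, pow_succ]
      _ = J * I ^ (k + 1) ⊔ (Ideal.span {f ^ (k + 1)} * J ⊔ Ideal.span {f ^ (k + 1 + 1)}) := by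
        rw [Ideal.sup_mul, mul_assoc, ← pow_succ, hI, Ideal.mul_sup,
          Ideal.span_singleton_mul_span_singleton, ← pow_succ, ← hI]
      _ = J * I ^ (k + 1) ⊔ Ideal.span {f ^ (k + 1 + 1)} := by
        rw [← sup_assoc, sup_eq_left.mpr hfJ]

lemma pow_succ_eq_mul_pow_iff (hI : I = J ⊔ Ideal.span {f}) {k : ℕ} :
    I ^ (k + 1) = J * I ^ k ↔ f ^ (k + 1) ∈ J * I ^ k := by
  rw [pow_succ_eq_mul_pow_sup hI, sup_eq_left, Ideal.span_singleton_le_iff_mem]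

lemma colon_span_pow_eq_top_iff (hI : I = J ⊔ Ideal.span {f}) {k : ℕ} :
    Submodule.colon (J * I ^ k) (Ideal.span {f ^ (k + 1)}) = ⊤ ↔ I ^ (k + 1) = J * I ^ k := by
  rw [Ideal.eq_top_iff_one, Submodule.mem_colon_span_singleton, one_smul,
    pow_succ_eq_mul_pow_iff hI]

lemma colon_le_colon_iff (hI : I = J ⊔ Ideal.span {f}) {e : ℕ}
    (h : I ^ (e + 2) = J * I ^ (e + 1)) :
    Submodule.colon (J * I ^ (e + 1)) (Ideal.span {f ^ (e + 2)}) ≤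
        Submodule.colon (J * I ^ e) (Ideal.span {f ^ (e + 1)}) ↔ I ^ (e + 1) = J * I ^ e := by
  rw [(colon_span_pow_eq_top_iff hI).mpr h, top_le_iff, colon_span_pow_eq_top_iff hI]

end IdealPowers

section Jpart

variable {n e : ℕ} {I : Ideal R} {z : Fin (n + 1) → R}

/-- The hypothesis of the theorem in degree `d = e + 2`, for the indices below `k`; indices are
`0`-based, so `z i` is the paper's `f_{i+1}` and `Jpart z i` is `J_i`. -/
def ColonCondition (I : Ideal R) (z : Fin (n + 1) → R) (k e : ℕ) : Prop :=
  ∀ i : Fin (n + 1), (i : ℕ) < k →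
    Submodule.colon (Jpart z i * I ^ (e + 1)) (Ideal.span {z i}) ⊓ I ^ (e + 1) ≤
      Jpart z i * I ^ e

lemma exists_mem_kosB1_apply_eq {i : Fin (n + 1)} {x : R} (hx : x ∈ Jpart z i * I ^ e) :
    ∃ s ∈ kosB1 I z (e + 2), s i = x ∧ ∀ j, i < j → s j = 0 := by
  induction hx using Submodule.mul_induction_on' with
  | mem_mul_mem y hy u hu =>
    induction hy using Submodule.span_induction with
    | mem y hy =>
      obtain ⟨l, hl, rfl⟩ := hy
      have hli : l ≠ i := Fin.ne_of_lt hl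
      refine ⟨_, single_sub_single_mem_kosB1 hu l i, by simp [hli], fun j hj => ?_⟩
      simp [hj.ne', (hl.trans hj).ne']
    | zero => exact ⟨0, zero_mem _, by simp, fun _ _ => rfl⟩
    | add y y' _ _ h h' =>
      obtain ⟨s, hs, hsi, hs0⟩ := h
      obtain ⟨s', hs', hsi', hs0'⟩ := h'
      exact ⟨s + s', add_mem hs hs', by simp [hsi, hsi', add_mul],
        fun j hj => by simp [hs0 j hj, hs0' j hj]⟩
    | smul r y _ h =>
      obtain ⟨s, hs, hsi, hs0⟩ := h
      exact ⟨r • s, Submodule.smul_mem _ r hs, by simp [hsi, mul_assoc],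
        fun j hj => by simp [hs0 j hj]⟩
  | add x _ x' _ h h' =>
    obtain ⟨s, hs, hsi, hs0⟩ := h
    obtain ⟨s', hs', hsi', hs0'⟩ := h'
    exact ⟨s + s', add_mem hs hs', by simp [hsi, hsi'],
      fun j hj => by simp [hs0 j hj, hs0' j hj]⟩

lemma mem_kosB1_of_forall_le_apply_eq_zero (hz : ∀ j, z j ∈ I) {k : ℕ} (hk : k ≤ n + 1)
    (hT : ColonCondition I z k e)
    {a : Fin (n + 1) → R} (ha : a ∈ kosZ1 I z (e + 2))
    (hsupp : ∀ j : Fin (n + 1), k ≤ j → a j = 0) : a ∈ kosB1 I z (e + 2) := by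
  induction k generalizing a with
  | zero =>
    obtain rfl : a = 0 := funext fun j => hsupp j (Nat.zero_le _)
    exact zero_mem _
  | succ k ih =>
    obtain ⟨hamem, hrel⟩ := mem_kosZ1.mp ha
    set i : Fin (n + 1) := ⟨k, by omega⟩
    have hrest : ∑ j ∈ Finset.univ.erase i, a j * z j ∈ Jpart z k * I ^ (e + 1) := by
      refine Submodule.sum_mem _ fun j hj => ?_
      rcases Nat.lt_or_ge j k with hjk | hjk
      · rw [mul_comm (a j)]
        exact Ideal.mul_mem_mul (Ideal.subset_span (Set.mem_image_of_mem z hjk)) (hamem j)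
      · have hji : (j : ℕ) ≠ k := fun h => (Finset.mem_erase.mp hj).1 (Fin.ext h)
        simp [hsupp j (by omega)]
    have hai : a i ∈ Jpart z i * I ^ e := by
      refine hT i (Nat.lt_succ_self k) ⟨Submodule.mem_colon_span_singleton.mpr ?_, hamem i⟩
      rw [smul_eq_mul, eq_neg_of_add_eq_zero_left
        ((Finset.add_sum_erase _ _ (Finset.mem_univ i)).trans hrel)]
      exact neg_mem hrest
    obtain ⟨s, hs, hsi, hs0⟩ := exists_mem_kosB1_apply_eq hai
    have hsub : a - s ∈ kosB1 I z (e + 2) := by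
      refine ih (by omega) (fun j hj => hT j (by omega))
        (sub_mem ha (kosB1_le_kosZ1 hz _ hs)) fun j hj => ?_
      rcases eq_or_ne (j : ℕ) k with hjk | hjk
      · simp [show j = i from Fin.ext hjk, hsi]
      · have hij : i < j := by rw [Fin.lt_def]; dsimp [i]; omega
        simp [hsupp j (by omega), hs0 j hij]
    simpa using add_mem hsub hs

lemma apply_last_mem_of_mem_kosB1 {d : ℕ} {v : Fin (n + 1) → R} (hv : v ∈ kosB1 I z d) :
    v (Fin.last n) ∈ Jpart z n * I ^ (d - 2) := by
  have hzJ : ∀ j, j ≠ Fin.last n → z j ∈ Jpart z n := fun j hj =>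
    Ideal.subset_span (Set.mem_image_of_mem z (Fin.val_lt_last hj))
  induction hv using Submodule.span_induction with
  | mem v hv =>
    obtain ⟨j, l, u, hu, rfl⟩ := hv
    rcases eq_or_ne j (Fin.last n) with rfl | hj <;>
      rcases eq_or_ne l (Fin.last n) with rfl | hl
    · simp
    · simpa [hl] using neg_mem (Ideal.mul_mem_mul (hzJ l hl) hu)
    · simpa [hj] using Ideal.mul_mem_mul (hzJ j hj) hu
    · simp [hj, hl]
  | zero => exact zero_mem _
  | add v w _ _ hv hw => exact add_mem hv hw
  | smul r v _ hv => exact Submodule.smul_mem _ r hv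

lemma mem_kosB1_of_apply_last_mem (hz : ∀ j, z j ∈ I)
    (hT : ColonCondition I z n e)
    {a : Fin (n + 1) → R} (ha : a ∈ kosZ1 I z (e + 2))
    (hlast : a (Fin.last n) ∈ Jpart z n * I ^ e) : a ∈ kosB1 I z (e + 2) := by
  obtain ⟨s, hs, hsi, -⟩ := exists_mem_kosB1_apply_eq (i := Fin.last n) (by simpa using hlast)
  have hsub : a - s ∈ kosB1 I z (e + 2) := by
    refine mem_kosB1_of_forall_le_apply_eq_zero hz n.le_succ hT
      (sub_mem ha (kosB1_le_kosZ1 hz _ hs)) fun j hj => ?_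
    obtain rfl : j = Fin.last n := Fin.ext (by have := j.isLt; simp only [Fin.val_last]; omega)
    simp [hsi]
  simpa using add_mem hsub hs

lemma exists_coeffs_of_mem_Jpart_mul {k : ℕ} {K : Ideal R} {y : R} (hy : y ∈ Jpart z k * K) :
    ∃ c : Fin (n + 1) → R, (∀ j, c j ∈ K) ∧ (∀ j : Fin (n + 1), k ≤ j → c j = 0) ∧
      ∑ j, c j * z j = y := by
  induction hy using Submodule.mul_induction_on' with
  | mem_mul_mem x hx u hu =>
    induction hx using Submodule.span_induction with
    | mem x hx =>
      obtain ⟨l, hl, rfl⟩ := hx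
      refine ⟨Pi.single l u, fun j => ?_, fun j hj => ?_, by simp [Pi.single_apply, mul_comm]⟩
      · rw [Pi.single_apply]; split_ifs <;> simp [hu]
      · have hjl : j ≠ l := fun h => by subst h; exact absurd hl (by simpa using hj)
        simp [hjl]
    | zero => exact ⟨0, fun _ => zero_mem _, fun _ _ => rfl, by simp⟩
    | add x x' _ _ h h' =>
      obtain ⟨c, hc, hc0, hsum⟩ := h
      obtain ⟨c', hc', hc0', hsum'⟩ := h'
      refine ⟨c + c', fun j => add_mem (hc j) (hc' j), fun j hj => by simp [hc0 j hj, hc0' j hj],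
        ?_⟩
      simp [add_mul, Finset.sum_add_distrib, hsum, hsum']
    | smul r x _ h =>
      obtain ⟨c, hc, hc0, hsum⟩ := h
      refine ⟨r • c, fun j => Submodule.smul_mem _ r (hc j), fun j hj => by simp [hc0 j hj],
        by simp [mul_assoc, ← Finset.mul_sum, hsum]⟩
  | add x _ x' _ h h' =>
    obtain ⟨c, hc, hc0, rfl⟩ := h
    obtain ⟨c', hc', hc0', rfl⟩ := h'
    exact ⟨c + c', fun j => add_mem (hc j) (hc' j), fun j hj => by simp [hc0 j hj, hc0' j hj],
      by simp [add_mul, Finset.sum_add_distrib]⟩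

end Jpart

section EffectiveRelations

variable {n e : ℕ} {z : Fin (n + 1) → R} {f : R} {J I : Ideal R}

noncomputable def lastCoordMkQ (I J : Ideal R) (z : Fin (n + 1) → R) (e : ℕ) :
    kosZ1 I z (e + 2) →ₗ[R] R ⧸ (J * I ^ e) :=
  (J * I ^ e).mkQ ∘ₗ LinearMap.proj (Fin.last n) ∘ₗ (kosZ1 I z (e + 2)).subtype

lemma apply_mem_of_eq_sup (hf : z (Fin.last n) = f) (hJ : Jpart z n = J)
    (hI : I = J ⊔ Ideal.span {f}) (j : Fin (n + 1)) : z j ∈ I := by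
  rcases eq_or_ne j (Fin.last n) with rfl | hj
  · exact hI ▸ Ideal.mem_sup_right (hf ▸ Ideal.mem_span_singleton_self _)
  · exact hI ▸ Ideal.mem_sup_left
      (hJ ▸ Ideal.subset_span (Set.mem_image_of_mem z (Fin.val_lt_last hj)))

lemma ker_lastCoordMkQ (hf : z (Fin.last n) = f) (hJ : Jpart z n = J)
    (hI : I = J ⊔ Ideal.span {f})
    (hT : ColonCondition I z n e) :
    LinearMap.ker (lastCoordMkQ I J z e) =
      Submodule.comap (kosZ1 I z (e + 2)).subtype (kosB1 I z (e + 2)) := by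
  ext a
  simp only [lastCoordMkQ, LinearMap.mem_ker, LinearMap.comp_apply, Submodule.mkQ_apply,
    Submodule.Quotient.mk_eq_zero, Submodule.mem_comap, Submodule.subtype_apply,
    LinearMap.proj_apply, ← hJ]
  exact ⟨mem_kosB1_of_apply_last_mem (apply_mem_of_eq_sup hf hJ hI) hT a.2,
    apply_last_mem_of_mem_kosB1⟩

lemma range_lastCoordMkQ (hf : z (Fin.last n) = f) (hJ : Jpart z n = J)
    (hI : I = J ⊔ Ideal.span {f}) :
    LinearMap.range (lastCoordMkQ I J z e) =
      LinearMap.range (mulMkQ (Submodule.colon (J * I ^ (e + 1)) (Ideal.span {f ^ (e + 2)}))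
        (J * I ^ e) (f ^ (e + 1))) := by
  have hz := apply_mem_of_eq_sup hf hJ hI
  have hfI : f ∈ I := hf ▸ hz (Fin.last n)
  ext q
  constructor
  · rintro ⟨⟨a, haZ⟩, rfl⟩
    obtain ⟨ha, hrel⟩ := mem_kosZ1.mp haZ
    obtain ⟨w, hw, _, hy, hwy⟩ :=
      Submodule.mem_sup.mp (pow_succ_eq_mul_pow_sup hI e ▸ ha (Fin.last n))
    obtain ⟨x, rfl⟩ := Ideal.mem_span_singleton'.mp hy
    have hlast : a (Fin.last n) * f ∈ J * I ^ (e + 1) := by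
      rw [Fin.sum_univ_castSucc, hf] at hrel
      rw [eq_neg_of_add_eq_zero_right hrel]
      refine neg_mem (Submodule.sum_mem _ fun j _ => ?_)
      rw [mul_comm (a _)]
      exact Ideal.mul_mem_mul (hJ ▸ Ideal.subset_span (Set.mem_image_of_mem z j.castSucc_lt_last))
        (ha _)
    have hx : x ∈ Submodule.colon (J * I ^ (e + 1)) (Ideal.span {f ^ (e + 2)}) := by
      rw [Submodule.mem_colon_span_singleton, smul_eq_mul,
        show x * f ^ (e + 2) = a (Fin.last n) * f - w * f by rw [← hwy]; ring]
      exact sub_mem hlast (by rw [pow_succ, ← mul_assoc]; exact Ideal.mul_mem_mul hw hfI)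
    refine ⟨⟨x, hx⟩, (Submodule.Quotient.eq _).mpr ?_⟩
    simpa [← hwy] using neg_mem hw
  · rintro ⟨⟨x, hx⟩, rfl⟩
    rw [Submodule.mem_colon_span_singleton, smul_eq_mul, ← hJ] at hx
    obtain ⟨c, hc, hc0, hsum⟩ := exists_coeffs_of_mem_Jpart_mul hx
    have hcl : c (Fin.last n) = 0 := hc0 _ (by simp)
    have haZ : Pi.single (Fin.last n) (x * f ^ (e + 1)) - c ∈ kosZ1 I z (e + 2) := by
      refine mem_kosZ1.mpr ⟨fun j => sub_mem ?_ (hc j), ?_⟩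
      · rw [Pi.single_apply]
        split_ifs
        · exact Ideal.mul_mem_left _ _ (pow_mem_pow hfI _)
        · exact zero_mem _
      · simp [sub_mul, hsum, hf, Pi.single_apply, pow_succ, mul_assoc]
    exact ⟨⟨_, haZ⟩, by simp [lastCoordMkQ, mulMkQ, hcl]⟩

noncomputable def kosH1EquivColonQuot (hf : z (Fin.last n) = f) (hJ : Jpart z n = J)
    (hI : I = J ⊔ Ideal.span {f})
    (hT : ColonCondition I z n e) :
    kosH1 I z (e + 2) ≃ₗ[R]
      idealQuot (Submodule.colon (J * I ^ (e + 1)) (Ideal.span {f ^ (e + 2)}))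
        (Submodule.colon (J * I ^ e) (Ideal.span {f ^ (e + 1)})) :=
  (Submodule.quotEquivOfEq _ _ (ker_lastCoordMkQ hf hJ hI hT).symm).trans <|
    (lastCoordMkQ I J z e).quotKerEquivRange.trans <|
      (LinearEquiv.ofEq _ _ (range_lastCoordMkQ hf hJ hI)).trans <|
        (LinearMap.quotKerEquivRange _).symm.trans <|
          Submodule.quotEquivOfEq _ _ (ker_mulMkQ _ _ _)

lemma kosZ1_le_kosB1_iff_pow_eq (hf : z (Fin.last n) = f) (hJ : Jpart z n = J)
    (hI : I = J ⊔ Ideal.span {f})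
    (hT : ColonCondition I z n e)
    (hred : I ^ (e + 2) = J * I ^ (e + 1)) :
    kosZ1 I z (e + 2) ≤ kosB1 I z (e + 2) ↔ I ^ (e + 1) = J * I ^ e := by
  rw [← colon_le_colon_iff hI hred, le_iff_subsingleton_quotient_comap,
    le_iff_subsingleton_quotient_comap]
  exact (kosH1EquivColonQuot hf hJ hI hT).toEquiv.subsingleton_congr

end EffectiveRelations

lemma Jpart_snoc_eq {n : ℕ} (g : Fin n → R) (f : R) :
    Jpart (Fin.snoc g f : Fin (n + 1) → R) n = Ideal.span (Set.range g) := by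
  refine congrArg Ideal.span (Set.ext fun y => ⟨?_, ?_⟩)
  · rintro ⟨l, hl, rfl⟩
    obtain ⟨j, rfl⟩ := Fin.exists_castSucc_eq.mpr (Fin.ne_of_lt hl)
    exact ⟨j, by simp⟩
  · rintro ⟨j, rfl⟩
    exact ⟨j.castSucc, j.isLt, by simp⟩

theorem stmt12 {R : Type*} [CommRing R]
    {n : ℕ} (g : Fin n → R) (f : R)
    (J I : Ideal R) (hJ : J = Ideal.span (Set.range g)) (hI : I = J ⊔ Ideal.span {f})
    (hT : ∀ d : ℕ, 2 ≤ d → ∀ i : ℕ, ∀ (hi1 : 1 ≤ i) (hi2 : i ≤ n),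
        Submodule.colon (Jpart (Fin.snoc g f) (i - 1) * I ^ (d - 1))
            (Ideal.span {(Fin.snoc g f : Fin (n + 1) → R) (⟨i - 1, by omega⟩ : Fin (n + 1))})
          ⊓ I ^ (d - 1) ≤
          Jpart (Fin.snoc g f) (i - 1) * I ^ (d - 2)) :
    (∀ d : ℕ, 2 ≤ d →
        Nonempty (kosH1 I (Fin.snoc g f : Fin (n + 1) → R) d ≃ₗ[R]
          idealQuot (Submodule.colon (J * I ^ (d - 1)) (Ideal.span {f ^ d}))
            (Submodule.colon (J * I ^ (d - 2)) (Ideal.span {f ^ (d - 1)})))) ∧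
    ((∃ r : ℕ, I ^ (r + 1) = J * I ^ r) →
      relationTypeKoszul I (Fin.snoc g f : Fin (n + 1) → R) = reductionNumber J I + 1) := by
  have hlast : (Fin.snoc g f : Fin (n + 1) → R) (Fin.last n) = f := Fin.snoc_last _ _
  have hJ' : Jpart (Fin.snoc g f) n = J := (Jpart_snoc_eq g f).trans hJ.symm
  have hT' (e : ℕ) : ColonCondition I (Fin.snoc g f) n e := fun i hi =>
    hT (e + 2) (by omega) (i + 1) (by omega) hi
  refine ⟨fun d hd => ?_, fun hred => ?_⟩
  · obtain ⟨e, rfl⟩ : ∃ e, d = e + 2 := ⟨d - 2, by omega⟩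
    exact ⟨kosH1EquivColonQuot hlast hJ' hI (hT' e)⟩
  · have hred₀ := pow_reductionNumber_succ hred
    have hvan (e : ℕ) (h : I ^ (e + 2) = J * I ^ (e + 1)) :=
      kosZ1_le_kosB1_iff_pow_eq hlast hJ' hI (hT' e) h
    refine relationTypeKoszul_eq (fun d hd => ?_) fun hr => ?_
    · obtain ⟨e, rfl⟩ : ∃ e, d = e + 2 := ⟨d - 2, by omega⟩
      exact (hvan e (pow_succ_eq_mul_pow_of_le hred₀ (by omega))).mpr
        (pow_succ_eq_mul_pow_of_le hred₀ (by omega))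
    · obtain ⟨e, he⟩ := Nat.exists_eq_add_of_le' hr
      rw [he, hvan e (pow_succ_eq_mul_pow_of_le hred₀ he.le)]
      intro h
      have := reductionNumber_le h
      omega
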